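/- Let F be the formal power series over ℚ whose coefficient of q^n is (n+1)·σ₁(n+1), i.e., F = Σ_{k≥1} k·σ₁(k)·q^{k−1}. Then for every natural number g ≥ 1, the Bryan–Leung count N_{g,4} := g · (coefficient of q^4 in F^{g−1}) satisfies N_{g,4} = 6g(g−1)(9g³ − 45g² + 94g − 75). -/

import Mathlib

/-!
Because `F` has constant term `1`, the coefficient of `q^n` in `F^m` for small `n` is a
polynomial in `m`: each way of writing `n` as an ordered sum of `k` positive parts contributes
`C(m, k)` times the product of the corresponding coefficients of `F`. For `n = 4`, the
coefficients `6, 12, 28, 30` of `q, …, q⁴` in `F` and `m = g - 1` give the node polynomial.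
-/

/-- The Bryan–Leung power series `F = Σ_{k≥1} k·σ₁(k)·q^{k−1}` over `ℚ`,
whose coefficient of `q^n` is `(n+1)·σ₁(n+1)`. -/
noncomputable def FBL : PowerSeries ℚ :=
  PowerSeries.mk fun n => (((n + 1) * ArithmeticFunction.sigma 1 (n + 1) : ℕ) : ℚ)

open PowerSeries Finset
open scoped ArithmeticFunction.sigma

namespace PowerSeries

variable {R : Type*} [CommRing R] {f : R⟦X⟧}

theorem coeff_one_pow_of_constantCoeff_eq_one (hf : constantCoeff f = 1) (m : ℕ) :
    coeff 1 (f ^ m) = m * coeff 1 f := by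
  simp [coeff_one_pow, hf]

theorem coeff_two_pow_of_constantCoeff_eq_one (hf : constantCoeff f = 1) (m : ℕ) :
    coeff 2 (f ^ m) = m * coeff 2 f + m.choose 2 * coeff 1 f ^ 2 := by
  induction m with
  | zero => simp
  | succ m ih =>
    rw [pow_succ, coeff_mul, Nat.sum_antidiagonal_eq_sum_range_succ_mk]
    simp only [Nat.reduceAdd, tsub_zero, tsub_self, Nat.add_one_sub_one,
      sum_range_succ, range_one, sum_singleton, coeff_zero_eq_constantCoeff, map_pow, hf, one_pow,
      one_mul, mul_one, coeff_one_pow_of_constantCoeff_eq_one hf, ih,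
      Nat.choose_succ_succ', Nat.choose_one_right, Nat.cast_add, Nat.cast_one]
    ring

theorem coeff_three_pow_of_constantCoeff_eq_one (hf : constantCoeff f = 1) (m : ℕ) :
    coeff 3 (f ^ m) = m * coeff 3 f + m.choose 2 * (2 * coeff 1 f * coeff 2 f)
      + m.choose 3 * coeff 1 f ^ 3 := by
  induction m with
  | zero => simp
  | succ m ih =>
    rw [pow_succ, coeff_mul, Nat.sum_antidiagonal_eq_sum_range_succ_mk]
    simp only [Nat.reduceAdd, Nat.reduceSub, tsub_zero, tsub_self, Nat.add_one_sub_one,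
      sum_range_succ, range_one, sum_singleton, coeff_zero_eq_constantCoeff, map_pow, hf, one_pow,
      one_mul, mul_one, coeff_one_pow_of_constantCoeff_eq_one hf,
      coeff_two_pow_of_constantCoeff_eq_one hf, ih, Nat.choose_succ_succ', Nat.choose_one_right,
      Nat.cast_add, Nat.cast_one]
    ring

theorem coeff_four_pow_of_constantCoeff_eq_one (hf : constantCoeff f = 1) (m : ℕ) :
    coeff 4 (f ^ m) = m * coeff 4 f + m.choose 2 * (2 * coeff 1 f * coeff 3 f + coeff 2 f ^ 2)
      + m.choose 3 * (3 * coeff 1 f ^ 2 * coeff 2 f) + m.choose 4 * coeff 1 f ^ 4 := by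
  induction m with
  | zero => simp
  | succ m ih =>
    rw [pow_succ, coeff_mul, Nat.sum_antidiagonal_eq_sum_range_succ_mk]
    simp only [Nat.reduceAdd, Nat.reduceSub, tsub_zero, tsub_self, Nat.add_one_sub_one,
      sum_range_succ, range_one, sum_singleton, coeff_zero_eq_constantCoeff, map_pow, hf, one_pow,
      one_mul, mul_one, coeff_one_pow_of_constantCoeff_eq_one hf,
      coeff_two_pow_of_constantCoeff_eq_one hf, coeff_three_pow_of_constantCoeff_eq_one hf, ih,
      Nat.choose_succ_succ', Nat.choose_one_right, Nat.cast_add, Nat.cast_one]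
    ring

end PowerSeries

theorem coeff_FBL (n : ℕ) : coeff n FBL = ((n + 1) * σ 1 (n + 1) : ℕ) := by
  simp [FBL]

theorem constantCoeff_FBL : constantCoeff FBL = 1 := by
  rw [← coeff_zero_eq_constantCoeff_apply, coeff_FBL]
  simp

theorem N_g_4_general (g : ℕ) :
    (g : ℚ) * (PowerSeries.coeff (R := ℚ) 4) (FBL ^ (g - 1)) =
      6 * (g : ℚ) * ((g : ℚ) - 1) * (9 * (g : ℚ) ^ 3 - 45 * (g : ℚ) ^ 2 + 94 * (g : ℚ) - 75) := by
  cases g with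
  | zero => simp
  | succ m =>
    have hσ : σ 1 2 = 3 ∧ σ 1 3 = 4 ∧ σ 1 4 = 7 ∧ σ 1 5 = 6 := by decide
    rw [Nat.add_sub_cancel, coeff_four_pow_of_constantCoeff_eq_one constantCoeff_FBL]
    simp only [coeff_FBL, hσ, Nat.cast_choose_eq_descPochhammer_div, descPochhammer_succ_right,
      descPochhammer_zero, Polynomial.eval_mul, Polynomial.eval_X, Polynomial.eval_sub,
      Polynomial.eval_one, Polynomial.eval_natCast, Nat.factorial, Nat.reduceAdd, Nat.reduceMul]
    push_cast
    ring

/-- The Bryan–Leung count `N_{g,4} := g · (coefficient of q^4 in F^{g−1})`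
is given by the node polynomial of Table (5.1). -/
theorem N_g_4 (g : ℕ) (hg : 1 ≤ g) :
    (g : ℚ) * (PowerSeries.coeff (R := ℚ) 4) (FBL ^ (g - 1)) =
      6 * (g : ℚ) * ((g : ℚ) - 1) * (9 * (g : ℚ) ^ 3 - 45 * (g : ℚ) ^ 2 + 94 * (g : ℚ) - 75) :=
  N_g_4_general g
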